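/- Let H be a simple (0,1)-matrix, let ℓ ≥ 0 and t ≥ 2 be integers, and assume that there is a constant c > 0 such that forb(m, H) ≤ c·m^ℓ for all m ≥ 1. Then there is a constant c' > 0 such that forb(m, t·H) ≤ c'·m^{ℓ+1} for all m ≥ 1. -/

import Mathlib

/-! Let `A` be a simple `m × p` matrix avoiding `t·H`, with `p ≥ t`. For each level `i`, look at the
columns of `A` restricted to the rows `i, …, m - 1`. The restrictions occurring at least `t`
times form a simple matrix avoiding `H` (a copy of `H` there lifts to a copy of `t·H` in `A`),
so there are at most `forb (m - i) H` of them. Each column of `A` occurs once at level `0` (as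
`A` is simple) and `p` times at level `m`, so it becomes heavy between some levels `i` and
`i + 1`. The columns doing so are determined, up to fewer than `t` choices, by their restriction at
level `i + 1` and their entry in row `i`; hence there are at most `2 (t - 1) forb (m - i - 1) H`
of them. Summing, `forb m (t·H) ≤ 2 (t - 1) ∑_{j < m} forb j H + t = O(m ^ (ℓ + 1))`. -/

/-- `F` is a configuration in `A`: some row and column permutation of `F`
is a submatrix of `A`. -/
def IsConfig {k n m p : ℕ} (F : Matrix (Fin k) (Fin n) Bool)
    (A : Matrix (Fin m) (Fin p) Bool) : Prop :=
  ∃ (r : Fin k → Fin m) (c : Fin n → Fin p),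
    Function.Injective r ∧ Function.Injective c ∧ ∀ i j, A (r i) (c j) = F i j

/-- A (0,1)-matrix is simple if no two of its columns are equal. -/
def Simple {m p : ℕ} (A : Matrix (Fin m) (Fin p) Bool) : Prop :=
  Function.Injective fun j i => A i j

/-- A (0,1)-matrix is `t`-simple if every column occurs with multiplicity at most `t`. -/
def TSimple {m p : ℕ} (t : ℕ) (A : Matrix (Fin m) (Fin p) Bool) : Prop :=
  ∀ j : Fin p, (Finset.univ.filter fun j' : Fin p => ∀ i, A i j' = A i j).card ≤ t

/-- `forb m F`: the maximum number of columns of an `m`-rowed simple matrix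
avoiding `F` as a configuration. -/
noncomputable def forb (m : ℕ) {k n : ℕ} (F : Matrix (Fin k) (Fin n) Bool) : ℕ :=
  sSup { p : ℕ | ∃ A : Matrix (Fin m) (Fin p) Bool, Simple A ∧ ¬ IsConfig F A }

/-- `t·M`: the concatenation of `t` copies of `M`. -/
def tCopies {k n : ℕ} (t : ℕ) (M : Matrix (Fin k) (Fin n) Bool) :
    Matrix (Fin k) (Fin (t * n)) Bool :=
  fun i j => M i ⟨j.val % n, Nat.mod_lt _ (by
    rcases Nat.eq_zero_or_pos n with h | h
    · exact absurd j.isLt (by simp [h])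
    · exact h)⟩

/-- `F_{a,b,c,d}`: the `(a+b+c+d) × 2` matrix with `a` rows `[1 1]`, `b` rows `[1 0]`,
`c` rows `[0 1]` and `d` rows `[0 0]`. -/
def Fabcd (a b c d : ℕ) : Matrix (Fin (a+b+c+d)) (Fin 2) Bool :=
  fun i j =>
    if i.val < a then true
    else if i.val < a + b then decide (j = 0)
    else if i.val < a + b + c then decide (j = 1)
    else false

open Finset Matrix

variable {k n m p q : ℕ}

theorem Simple.card_le {A : Matrix (Fin m) (Fin p) Bool} (hA : Simple A) : p ≤ 2 ^ m := by
  simpa using Fintype.card_le_of_injective _ hA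

theorem le_forb {F : Matrix (Fin k) (Fin n) Bool} {A : Matrix (Fin m) (Fin p) Bool}
    (hA : Simple A) (hF : ¬IsConfig F A) : p ≤ forb m F :=
  le_csSup ⟨2 ^ m, fun _ ⟨_, hB, _⟩ => hB.card_le⟩ ⟨A, hA, hF⟩

theorem forb_le_of_forall {F : Matrix (Fin k) (Fin n) Bool} {N : ℕ}
    (h : ∀ p (A : Matrix (Fin m) (Fin p) Bool), Simple A → ¬IsConfig F A → p ≤ N) :
    forb m F ≤ N :=
  csSup_le' fun p ⟨A, hA, hF⟩ => h p A hA hF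

theorem forb_le_two_pow (F : Matrix (Fin k) (Fin n) Bool) : forb m F ≤ 2 ^ m :=
  forb_le_of_forall fun _ _ hA _ => hA.card_le

theorem IsConfig.of_submatrix {m' p' : ℕ} {F : Matrix (Fin k) (Fin n) Bool}
    {A : Matrix (Fin m) (Fin p) Bool} {ρ : Fin m' → Fin m} {κ : Fin p' → Fin p}
    (h : IsConfig F (A.submatrix ρ κ)) (hρ : Function.Injective ρ)
    (hκ : Function.Injective κ) : IsConfig F A := by
  obtain ⟨r, c, hr, hc, hrc⟩ := h
  exact ⟨ρ ∘ r, κ ∘ c, hρ.comp hr, hκ.comp hc, hrc⟩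

theorem tCopies_apply (t : ℕ) (M : Matrix (Fin k) (Fin n) Bool) (i : Fin k) (j : Fin (t * n)) :
    tCopies t M i j = M i j.modNat := rfl

noncomputable def Finset.colMatrix (S : Finset (Fin m → Bool)) : Matrix (Fin m) (Fin #S) Bool :=
  fun i j => (S.equivFin.symm j : Fin m → Bool) i

theorem Finset.simple_colMatrix (S : Finset (Fin m → Bool)) : Simple S.colMatrix :=
  fun _ _ h => S.equivFin.symm.injective (Subtype.ext h)

def colMult (A : Matrix (Fin m) (Fin p) Bool) (v : Fin m → Bool) : ℕ :=
  #{j | (A · j) = v}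

def heavyCols (t : ℕ) (A : Matrix (Fin m) (Fin p) Bool) : Finset (Fin m → Bool) :=
  {v | t ≤ colMult A v}

@[simp]
theorem mem_heavyCols {t : ℕ} {A : Matrix (Fin m) (Fin p) Bool} {v : Fin m → Bool} :
    v ∈ heavyCols t A ↔ t ≤ colMult A v := by
  simp [heavyCols]

theorem IsConfig.tCopies_of_blowup {t : ℕ} {H : Matrix (Fin k) (Fin n) Bool}
    {D : Matrix (Fin m) (Fin q) Bool} {A : Matrix (Fin m) (Fin p) Bool} (hD : IsConfig H D)
    (g : Fin q → Fin t → Fin p) (hg : Function.Injective (Function.uncurry g))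
    (hgD : ∀ j s, (A · (g j s)) = (D · j)) : IsConfig (tCopies t H) A := by
  obtain ⟨r, c, hr, hc, hrc⟩ := hD
  -- column `j` of `t·H` is copy `j / n` of column `j % n` of `H`
  refine ⟨r, fun j => g (c j.modNat) j.divNat, hr, ?_, fun i j => ?_⟩
  · intro j j' hjj'
    obtain ⟨hmod, hdiv⟩ :=
      Prod.ext_iff.1 (hg (a₁ := (c j.modNat, j.divNat)) (a₂ := (c j'.modNat, j'.divNat)) hjj')
    exact finProdFinEquiv.symm.injective (Prod.ext hdiv (hc hmod))
  · rw [tCopies_apply, ← hrc]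
    exact congrFun (hgD _ _) (r i)

theorem IsConfig.tCopies_of_heavyCols {t : ℕ} {H : Matrix (Fin k) (Fin n) Bool}
    {A : Matrix (Fin m) (Fin p) Bool} (h : IsConfig H (heavyCols t A).colMatrix) :
    IsConfig (tCopies t H) A := by
  have hcopies (v : heavyCols t A) : Nonempty (Fin t ↪ {j // (A · j) = v.1}) := by
    apply Function.Embedding.nonempty_of_card_le
    simpa [Fintype.card_subtype, colMult] using mem_heavyCols.1 v.2
  have g (v : heavyCols t A) : Fin t ↪ {j // (A · j) = v.1} := (hcopies v).some
  refine h.tCopies_of_blowup (fun j s => (g ((heavyCols t A).equivFin.symm j) s).1) ?_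
    fun j s => (g _ s).2
  rintro ⟨j, s⟩ ⟨j', s'⟩ hjs
  have hjj : j = j' := (heavyCols t A).equivFin.symm.injective <| Subtype.ext <|
    (g _ s).2.symm.trans ((congrArg (fun i => (A · i)) hjs).trans (g _ s').2)
  subst hjj
  simp only [Prod.mk.injEq, true_and]
  exact (g _).injective (Subtype.ext hjs)

theorem card_heavyCols_le_forb {t : ℕ} {H : Matrix (Fin k) (Fin n) Bool}
    {A : Matrix (Fin m) (Fin p) Bool} (hA : ¬IsConfig (tCopies t H) A) :
    #(heavyCols t A) ≤ forb m H :=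
  le_forb (Finset.simple_colMatrix _) fun h => hA h.tCopies_of_heavyCols

def Matrix.dropRows {ι α : Type*} (A : Matrix (Fin m) ι α) (i : ℕ) : Matrix (Fin (m - i)) ι α :=
  A.submatrix (fun r => ⟨i + r, by have := r.isLt; omega⟩) id

theorem Matrix.dropRows_col_eq_iff {ι α : Type*} (A : Matrix (Fin m) ι α) (i : ℕ) (a b : ι) :
    (A.dropRows i · a) = (A.dropRows i · b) ↔ ∀ r : Fin m, i ≤ r → A r a = A r b := by
  refine ⟨fun h r hr => ?_, fun h => funext fun r => h _ (Nat.le_add_right _ _)⟩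
  have := congrFun h ⟨r - i, by omega⟩
  simpa [dropRows, Nat.add_sub_cancel' hr] using this

theorem Matrix.dropRows_col_eq_iff_succ {ι α : Type*} (A : Matrix (Fin m) ι α) {i : ℕ}
    (hi : i < m) (a b : ι) :
    (A.dropRows i · a) = (A.dropRows i · b) ↔
      A ⟨i, hi⟩ a = A ⟨i, hi⟩ b ∧ (A.dropRows (i + 1) · a) = (A.dropRows (i + 1) · b) := by
  simp only [dropRows_col_eq_iff]
  refine ⟨fun h => ⟨h _ le_rfl, fun r hr => h r (by omega)⟩, fun ⟨h₀, h⟩ r hr => ?_⟩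
  rcases hr.eq_or_lt with hr | hr
  · obtain rfl : r = ⟨i, hi⟩ := Fin.ext hr.symm
    exact h₀
  · exact h r hr

theorem IsConfig.of_dropRows {F : Matrix (Fin k) (Fin n) Bool} {A : Matrix (Fin m) (Fin p) Bool}
    {i : ℕ} (h : IsConfig F (A.dropRows i)) : IsConfig F A :=
  h.of_submatrix (fun r r' hrr' => Fin.ext (by simpa using congrArg Fin.val hrr'))
    Function.injective_id

def levelMult (A : Matrix (Fin m) (Fin p) Bool) (i : ℕ) (a : Fin p) : ℕ :=
  colMult (A.dropRows i) (A.dropRows i · a)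

theorem Simple.levelMult_zero_le_one {A : Matrix (Fin m) (Fin p) Bool} (hA : Simple A)
    (a : Fin p) : levelMult A 0 a ≤ 1 := by
  unfold levelMult colMult
  refine card_le_one.2 fun b hb b' hb' => hA (funext fun r => ?_)
  simp only [mem_filter, mem_univ, true_and, Matrix.dropRows_col_eq_iff] at hb hb'
  exact (hb r r.val.zero_le).trans (hb' r r.val.zero_le).symm

theorem levelMult_self (A : Matrix (Fin m) (Fin p) Bool) (a : Fin p) : levelMult A m a = p := by
  have hall (b : Fin p) : (A.dropRows m · b) = (A.dropRows m · a) :=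
    (A.dropRows_col_eq_iff m b a).2 fun r hr => absurd r.isLt (by omega)
  simp [levelMult, colMult, hall]

def switchCols (t : ℕ) (A : Matrix (Fin m) (Fin p) Bool) (i : ℕ) : Finset (Fin p) :=
  {a | levelMult A i a < t ∧ t ≤ levelMult A (i + 1) a}

theorem Nat.exists_not_and_succ {P : ℕ → Prop} {N : ℕ} (h0 : ¬P 0) (hN : P N) :
    ∃ i < N, ¬P i ∧ P (i + 1) := by
  induction N with
  | zero => exact absurd hN h0
  | succ N ih =>
    by_cases hPN : P N
    · obtain ⟨i, hi, h⟩ := ih hPN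
      exact ⟨i, by omega, h⟩
    · exact ⟨N, N.lt_succ_self, hPN, hN⟩

theorem Simple.univ_subset_biUnion_switchCols {t : ℕ} (ht : 2 ≤ t)
    {A : Matrix (Fin m) (Fin p) Bool} (hA : Simple A) (htp : t ≤ p) :
    univ ⊆ (range m).biUnion (switchCols t A) := by
  intro a _
  have h0 : ¬t ≤ levelMult A 0 a := by
    have := hA.levelMult_zero_le_one a
    omega
  obtain ⟨i, hi, hlight, hheavy⟩ :=
    Nat.exists_not_and_succ (P := fun i => t ≤ levelMult A i a) h0 (by rwa [levelMult_self])
  simpa [switchCols] using ⟨i, hi, not_le.1 hlight, hheavy⟩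

theorem card_switchCols_le (t : ℕ) (A : Matrix (Fin m) (Fin p) Bool) {i : ℕ} (hi : i < m) :
    #(switchCols t A i) ≤ 2 * (t - 1) * #(heavyCols t (A.dropRows (i + 1))) := by
  set B := A.dropRows i
  set B' := A.dropRows (i + 1)
  let key (a : Fin p) : (Fin (m - (i + 1)) → Bool) × Bool := ((B' · a), A ⟨i, hi⟩ a)
  -- Columns with the same key agree on the rows `≥ i`, so each fibre lies in one light class.
  have hfibre (x : (Fin (m - (i + 1)) → Bool) × Bool) :
      #{a ∈ switchCols t A i | key a = x} ≤ t - 1 := by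
    rcases Finset.eq_empty_or_nonempty {a ∈ switchCols t A i | key a = x} with he | ⟨a₀, ha₀⟩
    · simp [he]
    simp only [switchCols, mem_filter, mem_univ, true_and] at ha₀
    have hsub : {a ∈ switchCols t A i | key a = x} ⊆ ({b | (B · b) = (B · a₀)} : Finset _) := by
      intro a ha
      simp only [mem_filter, mem_univ, true_and] at ha ⊢
      rw [← ha₀.2, Prod.mk.injEq] at ha
      exact (A.dropRows_col_eq_iff_succ hi a a₀).2 ⟨ha.2.2, ha.2.1⟩
    exact (card_le_card hsub).trans (Nat.le_sub_one_of_lt ha₀.1.1)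
  calc #(switchCols t A i) ≤ (t - 1) * #(heavyCols t B' ×ˢ (univ : Finset Bool)) :=
        card_le_mul_card_image_of_maps_to
          (fun a ha => mem_product.2 ⟨mem_heavyCols.2 (mem_filter.1 ha).2.2, mem_univ _⟩)
          _ fun x _ => hfibre x
    _ = 2 * (t - 1) * #(heavyCols t B') := by
        rw [card_product, card_univ, Fintype.card_bool]
        ring

theorem card_le_of_not_isConfig_tCopies {t : ℕ} (ht : 2 ≤ t) {H : Matrix (Fin k) (Fin n) Bool}
    {A : Matrix (Fin m) (Fin p) Bool} (hA : Simple A) (hAH : ¬IsConfig (tCopies t H) A)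
    (htp : t ≤ p) : p ≤ 2 * (t - 1) * ∑ j ∈ range m, forb j H := by
  have hheavy (i : ℕ) : #(heavyCols t (A.dropRows (i + 1))) ≤ forb (m - 1 - i) H := by
    rw [Nat.sub_sub, Nat.add_comm 1 i]
    exact card_heavyCols_le_forb fun h => hAH h.of_dropRows
  calc p = #(univ : Finset (Fin p)) := (card_fin p).symm
    _ ≤ ∑ i ∈ range m, #(switchCols t A i) :=
        (card_le_card (hA.univ_subset_biUnion_switchCols ht htp)).trans card_biUnion_le
    _ ≤ ∑ i ∈ range m, 2 * (t - 1) * forb (m - 1 - i) H :=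
        sum_le_sum fun i hi =>
          (card_switchCols_le t A (mem_range.1 hi)).trans (Nat.mul_le_mul_left _ (hheavy i))
    _ = 2 * (t - 1) * ∑ j ∈ range m, forb j H := by
        rw [← mul_sum, sum_range_reflect (fun j => forb j H) m]

theorem forb_tCopies_le {t : ℕ} (ht : 2 ≤ t) (m : ℕ) (H : Matrix (Fin k) (Fin n) Bool) :
    forb m (tCopies t H) ≤ 2 * (t - 1) * ∑ j ∈ range m, forb j H + t :=
  forb_le_of_forall fun p _ hA hAH => by
    rcases lt_or_ge p t with hpt | htp
    · omega
    · exact (card_le_of_not_isConfig_tCopies ht hA hAH htp).trans (Nat.le_add_right _ _)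

theorem sum_range_le_of_le_pow {f : ℕ → ℕ} {c : ℝ} {ℓ : ℕ} (hc : 0 ≤ c) (h0 : f 0 ≤ 1)
    (hf : ∀ m : ℕ, 1 ≤ m → (f m : ℝ) ≤ c * (m : ℝ) ^ ℓ) (m : ℕ) :
    (∑ j ∈ range m, (f j : ℝ)) ≤ (c + 1) * (m : ℝ) ^ (ℓ + 1) := by
  have hterm (j : ℕ) (hj : j ∈ range m) : (f j : ℝ) ≤ c * (m : ℝ) ^ ℓ + 1 := by
    rcases j.eq_zero_or_pos with rfl | hj0
    · have : (f 0 : ℝ) ≤ 1 := by exact_mod_cast h0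
      linarith [show 0 ≤ c * (m : ℝ) ^ ℓ by positivity]
    · calc (f j : ℝ) ≤ c * (j : ℝ) ^ ℓ := hf j hj0
        _ ≤ c * (m : ℝ) ^ ℓ := by gcongr; exact (mem_range.1 hj).le
        _ ≤ c * (m : ℝ) ^ ℓ + 1 := le_add_of_nonneg_right zero_le_one
  have hm : (m : ℝ) ≤ (m : ℝ) ^ (ℓ + 1) := by exact_mod_cast Nat.le_self_pow ℓ.succ_ne_zero m
  calc (∑ j ∈ range m, (f j : ℝ)) ≤ ∑ _j ∈ range m, (c * (m : ℝ) ^ ℓ + 1) := sum_le_sum hterm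
    _ = c * (m : ℝ) ^ (ℓ + 1) + m := by simp only [sum_const, card_range, nsmul_eq_mul]; ring
    _ ≤ c * (m : ℝ) ^ (ℓ + 1) + (m : ℝ) ^ (ℓ + 1) := by gcongr
    _ = (c + 1) * (m : ℝ) ^ (ℓ + 1) := by ring

theorem stmt_8_general {kH nH : ℕ} (H : Matrix (Fin kH) (Fin nH) Bool)
    (ℓ t : ℕ) (ht : 2 ≤ t) (c : ℝ) (hc : 0 < c)
    (hbound : ∀ m : ℕ, 1 ≤ m → (forb m H : ℝ) ≤ c * (m : ℝ) ^ ℓ) :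
    ∃ c' : ℝ, 0 < c' ∧ ∀ m : ℕ, 1 ≤ m →
      (forb m (tCopies t H) : ℝ) ≤ c' * (m : ℝ) ^ (ℓ + 1) := by
  refine ⟨2 * t * (c + 1) + t, by positivity, fun m hm => ?_⟩
  have hsum := sum_range_le_of_le_pow hc.le ((forb_le_two_pow H).trans_eq (pow_zero 2)) hbound m
  have hpow : (1 : ℝ) ≤ (m : ℝ) ^ (ℓ + 1) := one_le_pow₀ (by exact_mod_cast hm)
  have ht1 : ((t - 1 : ℕ) : ℝ) ≤ t := by exact_mod_cast Nat.sub_le t 1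
  calc (forb m (tCopies t H) : ℝ)
      ≤ 2 * ((t - 1 : ℕ) : ℝ) * ∑ j ∈ range m, (forb j H : ℝ) + t := by
        exact_mod_cast forb_tCopies_le ht m H
    _ ≤ 2 * t * ((c + 1) * (m : ℝ) ^ (ℓ + 1)) + t * (m : ℝ) ^ (ℓ + 1) := by
        gcongr
        exact le_mul_of_one_le_right (by positivity) hpow
    _ = (2 * t * (c + 1) + t) * (m : ℝ) ^ (ℓ + 1) := by ring

/-- **Lemma 4.1.** If `H` is a simple matrix with `forb(m,H) = O(m^ℓ)`,
then `forb(m, t·H) = O(m^{ℓ+1})`. -/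
theorem stmt_8 {kH nH : ℕ} (H : Matrix (Fin kH) (Fin nH) Bool) (hH : Simple H)
    (ℓ t : ℕ) (ht : 2 ≤ t) (c : ℝ) (hc : 0 < c)
    (hbound : ∀ m : ℕ, 1 ≤ m → (forb m H : ℝ) ≤ c * (m : ℝ) ^ ℓ) :
    ∃ c' : ℝ, 0 < c' ∧ ∀ m : ℕ, 1 ≤ m →
      (forb m (tCopies t H) : ℝ) ≤ c' * (m : ℝ) ^ (ℓ + 1) :=
  stmt_8_general H ℓ t ht c hc hbound
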